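/- arXiv:2401.15273 — 7 statements merged into one kernel-verified Lean document; each statement's English description precedes it below -/
import Mathlib

section
/- Let d ≥ 1 and let A₁, A₂ be real d×d matrices, b₁, b₂ ∈ ℝ^d, and θ₁, θ₂ ∈ ℝ^d satisfy A₁θ₁ + b₁ = 0 and A₂θ₂ + b₂ = 0. Let w, R, G, σ > 0, γ ∈ (0,1), L ≥ 0, ε_p ≥ 0, ε_r ≥ 0, and set H = R + (1+γ)G. Assume: (i) A₂ is invertible and its inverse has operator norm ‖A₂⁻¹‖ ≤ 1/(2w); (ii) ‖θ₁‖ ≤ G; (iii) ‖A₁ − A₂‖ ≤ (1+γ)σ(ε_p + L‖θ₁ − θ₂‖); (iv) ‖b₁ − b₂‖ ≤ R(ε_r + σε_p) + RLσ‖θ₁ − θ₂‖; (v) LHσ ≤ w. Then ‖θ₁ − θ₂‖ ≤ (Rε_r + Hσε_p)/w. -/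
/-!
Subtracting the two fixed-point equations gives `A₂ (θ₁ - θ₂) = (b₂ - b₁) - (A₁ - A₂) θ₁`, so applying
the inverse of `A₂` bounds `Δ = ‖θ₁ - θ₂‖` by `(R εᵣ + H σ εₚ + L H σ Δ) / (2w)`. Since `L H σ ≤ w`, the
term in `Δ` on the right is at most `Δ / 2` and can be absorbed into the left-hand side.
-/

section FixedPointPerturbation

variable {𝕜 E F : Type*} [NontriviallyNormedField 𝕜] [SeminormedAddCommGroup E]
  [SeminormedAddCommGroup F] [NormedSpace 𝕜 E] [NormedSpace 𝕜 F]

theorem ContinuousLinearMap.apply_sub_eq_of_add_eq_zero {A₁ A₂ : E →L[𝕜] F} {b₁ b₂ : F}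
    {θ₁ θ₂ : E} (h₁ : A₁ θ₁ + b₁ = 0) (h₂ : A₂ θ₂ + b₂ = 0) :
    A₂ (θ₁ - θ₂) = (b₂ - b₁) - (A₁ - A₂) θ₁ := by
  rw [map_sub, sub_apply, eq_neg_of_add_eq_zero_left h₁, eq_neg_of_add_eq_zero_left h₂]
  abel

theorem ContinuousLinearMap.norm_sub_le_of_comp_eq_id {A₁ A₂ : E →L[𝕜] F} {B : F →L[𝕜] E}
    {b₁ b₂ : F} {θ₁ θ₂ : E} (h₁ : A₁ θ₁ + b₁ = 0) (h₂ : A₂ θ₂ + b₂ = 0)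
    (hBA : B.comp A₂ = ContinuousLinearMap.id 𝕜 E) :
    ‖θ₁ - θ₂‖ ≤ ‖B‖ * (‖b₁ - b₂‖ + ‖A₁ - A₂‖ * ‖θ₁‖) := by
  have hθ : θ₁ - θ₂ = B ((b₂ - b₁) - (A₁ - A₂) θ₁) := by
    rw [← apply_sub_eq_of_add_eq_zero h₁ h₂, ← ContinuousLinearMap.comp_apply, hBA,
      ContinuousLinearMap.id_apply]
  calc ‖θ₁ - θ₂‖ ≤ ‖B‖ * ‖(b₂ - b₁) - (A₁ - A₂) θ₁‖ := hθ ▸ B.le_opNorm _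
    _ ≤ ‖B‖ * (‖b₁ - b₂‖ + ‖A₁ - A₂‖ * ‖θ₁‖) := by
      gcongr
      rw [norm_sub_rev b₁ b₂]
      exact (norm_sub_le _ _).trans (add_le_add_right ((A₁ - A₂).le_opNorm θ₁) _)

end FixedPointPerturbation

theorem le_div_of_le_one_div_two_mul_mul_add {Δ w a k : ℝ} (hw : 0 < w) (hΔ : 0 ≤ Δ) (hk : k ≤ w)
    (h : Δ ≤ 1 / (2 * w) * (a + k * Δ)) : Δ ≤ a / w := by
  rw [div_mul_eq_mul_div, one_mul, le_div_iff₀ (by positivity)] at h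
  rw [le_div_iff₀ hw]
  linarith [mul_le_mul_of_nonneg_right hk hΔ]

theorem stmt0_general {d : ℕ}
    (A₁ A₂ B : EuclideanSpace ℝ (Fin d) →L[ℝ] EuclideanSpace ℝ (Fin d))
    (b₁ b₂ θ₁ θ₂ : EuclideanSpace ℝ (Fin d))
    (w R G σ γ L εp εr H : ℝ)
    (hw : 0 < w)
    (hH : H = R + (1 + γ) * G)
    (hfix1 : A₁ θ₁ + b₁ = 0) (hfix2 : A₂ θ₂ + b₂ = 0)
    (hBA : B.comp A₂ = ContinuousLinearMap.id ℝ (EuclideanSpace ℝ (Fin d)))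
    (hBnorm : ‖B‖ ≤ 1 / (2 * w))
    (hθ₁ : ‖θ₁‖ ≤ G)
    (hA : ‖A₁ - A₂‖ ≤ (1 + γ) * σ * (εp + L * ‖θ₁ - θ₂‖))
    (hb : ‖b₁ - b₂‖ ≤ R * (εr + σ * εp) + R * L * σ * ‖θ₁ - θ₂‖)
    (hLHσ : L * H * σ ≤ w) :
    ‖θ₁ - θ₂‖ ≤ (R * εr + H * σ * εp) / w := by
  have hAθ := mul_le_mul hA hθ₁ (norm_nonneg θ₁) ((norm_nonneg _).trans hA)
  have hperturb : ‖b₁ - b₂‖ + ‖A₁ - A₂‖ * ‖θ₁‖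
      ≤ R * εr + H * σ * εp + L * H * σ * ‖θ₁ - θ₂‖ := by
    rw [hH]
    linarith
  refine le_div_of_le_one_div_two_mul_mul_add hw (norm_nonneg _) hLHσ ?_
  calc ‖θ₁ - θ₂‖ ≤ ‖B‖ * (‖b₁ - b₂‖ + ‖A₁ - A₂‖ * ‖θ₁‖) :=
        ContinuousLinearMap.norm_sub_le_of_comp_eq_id hfix1 hfix2 hBA
    _ ≤ 1 / (2 * w) * (R * εr + H * σ * εp + L * H * σ * ‖θ₁ - θ₂‖) := by
      gcongr

/-- Perturbation bound on SARSA fixed points (abstract linear-algebraic core of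
Theorem 1): if `A₁ θ₁ + b₁ = 0`, `A₂ θ₂ + b₂ = 0`, `A₂` is invertible with
`‖A₂⁻¹‖ ≤ 1/(2w)`, and the TD-operator differences are controlled by the
heterogeneity levels, then `‖θ₁ - θ₂‖ ≤ (R εᵣ + H σ εₚ)/w`. -/
theorem stmt0 {d : ℕ} (hd : 1 ≤ d)
    (A₁ A₂ B : EuclideanSpace ℝ (Fin d) →L[ℝ] EuclideanSpace ℝ (Fin d))
    (b₁ b₂ θ₁ θ₂ : EuclideanSpace ℝ (Fin d))
    (w R G σ γ L εp εr H : ℝ)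
    (hw : 0 < w) (hR : 0 < R) (hG : 0 < G) (hσ : 0 < σ)
    (hγ : γ ∈ Set.Ioo (0 : ℝ) 1) (hL : 0 ≤ L)
    (hεp : 0 ≤ εp) (hεr : 0 ≤ εr)
    (hH : H = R + (1 + γ) * G)
    (hfix1 : A₁ θ₁ + b₁ = 0) (hfix2 : A₂ θ₂ + b₂ = 0)
    (hBA : B.comp A₂ = ContinuousLinearMap.id ℝ (EuclideanSpace ℝ (Fin d)))
    (hAB : A₂.comp B = ContinuousLinearMap.id ℝ (EuclideanSpace ℝ (Fin d)))
    (hBnorm : ‖B‖ ≤ 1 / (2 * w))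
    (hθ₁ : ‖θ₁‖ ≤ G)
    (hA : ‖A₁ - A₂‖ ≤ (1 + γ) * σ * (εp + L * ‖θ₁ - θ₂‖))
    (hb : ‖b₁ - b₂‖ ≤ R * (εr + σ * εp) + R * L * σ * ‖θ₁ - θ₂‖)
    (hLHσ : L * H * σ ≤ w) :
    ‖θ₁ - θ₂‖ ≤ (R * εr + H * σ * εp) / w :=
  stmt0_general A₁ A₂ B b₁ b₂ θ₁ θ₂ w R G σ γ L εp εr H hw hH hfix1 hfix2 hBA hBnorm hθ₁ hA hb hLHσ
end

section
/- Let (Ω, μ) be a probability space, d ≥ 1, γ ∈ [0,1), and let φ, ψ : Ω → ℝ^d be measurable with every coordinate square-integrable. Assume that for every x ∈ ℝ^d, ∫ ⟨φ(ω), x⟩² dμ(ω) = ∫ ⟨ψ(ω), x⟩² dμ(ω). Then for every x ∈ ℝ^d: γ·∫ ⟨φ(ω), x⟩·⟨ψ(ω), x⟩ dμ(ω) − ∫ ⟨φ(ω), x⟩² dμ(ω) ≤ −(1−γ)·∫ ⟨φ(ω), x⟩² dμ(ω). Consequently, if λ > 0 satisfies ∫ ⟨φ(ω), x⟩² dμ(ω)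 ≥ λ‖x‖² for all x, then the matrix Ā = ∫ φ(ω)(γψ(ω) − φ(ω))ᵀ dμ(ω) satisfies ⟨x, Āx⟩ ≤ −(1−γ)·λ·‖x‖² for all x ∈ ℝ^d. -/
open MeasureTheory
open scoped Matrix

/-!
By stationarity `E⟨ψ,x⟩² = E⟨φ,x⟩²`, so AM–GM gives
`E[⟨φ,x⟩⟨ψ,x⟩] ≤ (E⟨φ,x⟩² + E⟨ψ,x⟩²)/2 = E⟨φ,x⟩²`; multiplying by `γ ≥ 0` yields the first claim.
Since `Ā` is the entrywise integral of the rank-one matrices `φ (γψ − φ)ᵀ`, its quadratic form is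
`γ E[⟨φ,x⟩⟨ψ,x⟩] − E⟨φ,x⟩²`, and the second claim follows from the first and `E⟨φ,x⟩² ≥ λ‖x‖²`.
-/

section

variable {Ω ι : Type*} [MeasurableSpace Ω] {μ : Measure Ω} [Fintype ι]

lemma memLp_dotProduct {p : ENNReal} {φ : Ω → ι → ℝ} (hφ : ∀ i, MemLp (fun ω => φ ω i) p μ)
    (x : ι → ℝ) : MemLp (fun ω => φ ω ⬝ᵥ x) p μ :=
  memLp_finsetSum Finset.univ fun i _ => (hφ i).mul_const (x i)

lemma integral_mul_le_of_integral_sq_eq {f g : Ω → ℝ} (hf : MemLp f 2 μ) (hg : MemLp g 2 μ)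
    (hfg : ∫ ω, f ω ^ 2 ∂μ = ∫ ω, g ω ^ 2 ∂μ) :
    ∫ ω, f ω * g ω ∂μ ≤ ∫ ω, f ω ^ 2 ∂μ :=
  calc ∫ ω, f ω * g ω ∂μ ≤ ∫ ω, (f ω ^ 2 + g ω ^ 2) / 2 ∂μ :=
        integral_mono (hf.integrable_mul hg)
          ((hf.integrable_sq.add hg.integrable_sq).div_const 2)
          fun ω => by nlinarith [sq_nonneg (f ω - g ω)]
    _ = ∫ ω, f ω ^ 2 ∂μ := by
        rw [integral_div, integral_add hf.integrable_sq hg.integrable_sq, ← hfg]; ring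

lemma dotProduct_mulVec_integral {M : Ω → Matrix ι ι ℝ}
    (hM : ∀ i j, Integrable (fun ω => M ω i j) μ) (x y : ι → ℝ) :
    x ⬝ᵥ (Matrix.of fun i j => ∫ ω, M ω i j ∂μ) *ᵥ y = ∫ ω, x ⬝ᵥ M ω *ᵥ y ∂μ := by
  simp only [dotProduct, Matrix.mulVec, Matrix.of_apply, Finset.mul_sum]
  rw [integral_finsetSum _ fun i _ => integrable_finsetSum _ fun j _ =>
    ((hM i j).mul_const (y j)).const_mul (x i)]
  refine Finset.sum_congr rfl fun i _ => ?_
  rw [integral_finsetSum _ fun j _ => ((hM i j).mul_const (y j)).const_mul (x i)]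
  simp only [integral_const_mul, integral_mul_const]

lemma dotProduct_vecMulVec_mulVec (u v x : ι → ℝ) :
    x ⬝ᵥ Matrix.vecMulVec u v *ᵥ x = (u ⬝ᵥ x) * (v ⬝ᵥ x) := by
  rw [Matrix.vecMulVec_mulVec, dotProduct_comm]
  simp [mul_comm]

lemma dotProduct_meanPathMatrix_mulVec {φ ψ : Ω → ι → ℝ}
    (hφ : ∀ i, MemLp (fun ω => φ ω i) 2 μ) (hψ : ∀ i, MemLp (fun ω => ψ ω i) 2 μ)
    (γ : ℝ) (x : ι → ℝ) :
    x ⬝ᵥ (Matrix.of fun i j => ∫ ω, φ ω i * (γ * ψ ω j - φ ω j) ∂μ) *ᵥ x =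
      γ * ∫ ω, (φ ω ⬝ᵥ x) * (ψ ω ⬝ᵥ x) ∂μ - ∫ ω, (φ ω ⬝ᵥ x) ^ 2 ∂μ := by
  have hφx := memLp_dotProduct hφ x
  refine (dotProduct_mulVec_integral (M := fun ω => Matrix.vecMulVec (φ ω) (γ • ψ ω - φ ω))
    (fun i j => (hφ i).integrable_mul (((hψ j).const_mul γ).sub (hφ j))) x x).trans ?_
  simp only [dotProduct_vecMulVec_mulVec, sub_dotProduct, smul_dotProduct, smul_eq_mul]
  have hcross : Integrable (fun ω => γ * ((φ ω ⬝ᵥ x) * (ψ ω ⬝ᵥ x))) μ :=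
    (hφx.integrable_mul (memLp_dotProduct hψ x)).const_mul γ
  rw [← integral_const_mul, ← integral_sub hcross hφx.integrable_sq]
  congr 1; ext ω; ring

end

theorem stmt3_general {d : ℕ} {Ω : Type*} [MeasurableSpace Ω]
    (μ : Measure Ω)
    (γ : ℝ) (hγ : γ ∈ Set.Ico (0 : ℝ) 1)
    (φ ψ : Ω → Fin d → ℝ)
    (hφ2 : ∀ i, MemLp (fun ω => φ ω i) 2 μ)
    (hψ2 : ∀ i, MemLp (fun ω => ψ ω i) 2 μ)
    (hstat : ∀ x : Fin d → ℝ,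
      ∫ ω, (φ ω ⬝ᵥ x) ^ 2 ∂μ = ∫ ω, (ψ ω ⬝ᵥ x) ^ 2 ∂μ) :
    (∀ x : Fin d → ℝ,
      γ * ∫ ω, (φ ω ⬝ᵥ x) * (ψ ω ⬝ᵥ x) ∂μ - ∫ ω, (φ ω ⬝ᵥ x) ^ 2 ∂μ ≤
        -((1 - γ) * ∫ ω, (φ ω ⬝ᵥ x) ^ 2 ∂μ)) ∧
    ∀ lam : ℝ, 0 < lam →
      (∀ x : Fin d → ℝ, lam * (x ⬝ᵥ x) ≤ ∫ ω, (φ ω ⬝ᵥ x) ^ 2 ∂μ) →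
      ∀ x : Fin d → ℝ,
        x ⬝ᵥ (Matrix.of fun i j =>
            ∫ ω, φ ω i * (γ * ψ ω j - φ ω j) ∂μ).mulVec x ≤
          -((1 - γ) * lam * (x ⬝ᵥ x)) := by
  obtain ⟨hγ0, hγ1⟩ := hγ
  have hcross : ∀ x, γ * ∫ ω, (φ ω ⬝ᵥ x) * (ψ ω ⬝ᵥ x) ∂μ ≤ γ * ∫ ω, (φ ω ⬝ᵥ x) ^ 2 ∂μ :=
    fun x => mul_le_mul_of_nonneg_left (integral_mul_le_of_integral_sq_eq
      (memLp_dotProduct hφ2 x) (memLp_dotProduct hψ2 x) (hstat x)) hγ0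
  refine ⟨fun x => by linarith [hcross x], fun lam _ hlow x => ?_⟩
  rw [dotProduct_meanPathMatrix_mulVec hφ2 hψ2]
  nlinarith [hcross x, mul_le_mul_of_nonneg_left (hlow x) (sub_nonneg.2 hγ1.le)]

/-- Negative definiteness of the mean-path TD operator (Tsitsiklis–Van Roy):
if `φ, ψ : Ω → ℝ^d` have equal second moments along every direction
(stationarity), then `γ E[⟨φ,x⟩⟨ψ,x⟩] − E[⟨φ,x⟩²] ≤ −(1−γ) E[⟨φ,x⟩²]`, and
consequently, if `E[⟨φ,x⟩²] ≥ λ ‖x‖²` for all `x`, then the matrix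
`Ā = E[φ (γψ − φ)ᵀ]` satisfies `⟨x, Ā x⟩ ≤ −(1−γ) λ ‖x‖²`.  Here the Euclidean
inner product is the dot product `⬝ᵥ` and `‖x‖² = x ⬝ᵥ x`. -/
theorem stmt3 {d : ℕ} (hd : 1 ≤ d) {Ω : Type*} [MeasurableSpace Ω]
    (μ : Measure Ω) [IsProbabilityMeasure μ]
    (γ : ℝ) (hγ : γ ∈ Set.Ico (0 : ℝ) 1)
    (φ ψ : Ω → Fin d → ℝ) (hφm : Measurable φ) (hψm : Measurable ψ)
    (hφ2 : ∀ i, MemLp (fun ω => φ ω i) 2 μ)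
    (hψ2 : ∀ i, MemLp (fun ω => ψ ω i) 2 μ)
    (hstat : ∀ x : Fin d → ℝ,
      ∫ ω, (φ ω ⬝ᵥ x) ^ 2 ∂μ = ∫ ω, (ψ ω ⬝ᵥ x) ^ 2 ∂μ) :
    (∀ x : Fin d → ℝ,
      γ * ∫ ω, (φ ω ⬝ᵥ x) * (ψ ω ⬝ᵥ x) ∂μ - ∫ ω, (φ ω ⬝ᵥ x) ^ 2 ∂μ ≤
        -((1 - γ) * ∫ ω, (φ ω ⬝ᵥ x) ^ 2 ∂μ)) ∧
    ∀ lam : ℝ, 0 < lam →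
      (∀ x : Fin d → ℝ, lam * (x ⬝ᵥ x) ≤ ∫ ω, (φ ω ⬝ᵥ x) ^ 2 ∂μ) →
      ∀ x : Fin d → ℝ,
        x ⬝ᵥ (Matrix.of fun i j =>
            ∫ ω, φ ω i * (γ * ψ ω j - φ ω j) ∂μ).mulVec x ≤
          -((1 - γ) * lam * (x ⬝ᵥ x)) :=
  stmt3_general μ γ hγ φ ψ hφ2 hψ2 hstat
end

section
/- Let d ≥ 1, let A be a map from ℝ^d to the real d×d matrices and b : ℝ^d → ℝ^d, and define g(θ) = A(θ)·θ + b(θ). Fix θ* ∈ ℝ^d, and constants w, R, G, σ > 0, γ ∈ (0,1), L ≥ 0, with H = R + (1+γ)G. Assume: (i) ⟨x, A(θ*)x⟩ ≤ −2w‖x‖² for all x ∈ ℝ^d; (ii) for all θ, the operator norm ‖A(θ) − A(θ*)‖ ≤ (1+γ)Lσ‖θ − θ*‖; (iii) for all θ, ‖b(θ) − b(θ*)‖ ≤ RLσ‖θ − θ*‖; (iv) LσH ≤ w. Then for every θ with ‖θ‖ ≤ G: ⟨θ − θ*, g(θ) − g(θ*)⟩ ≤ −w·‖θ − θ*‖².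 -/
open scoped RealInnerProductSpace

/-!
Split `g θ - g θ*` into the principal part `A θ* (θ - θ*)`, which by negative definiteness
contributes at most `-2w ‖θ - θ*‖²`, and the perturbation `(A θ - A θ*) θ + (b θ - b θ*)`, whose
norm is at most `L σ ((1 + γ) G + R) ‖θ - θ*‖ = L σ H ‖θ - θ*‖ ≤ w ‖θ - θ*‖` on the ball
`‖θ‖ ≤ G`. By Cauchy–Schwarz the perturbation costs at most `w ‖θ - θ*‖²`.
-/

section

variable {E : Type*} [NormedAddCommGroup E] [InnerProductSpace ℝ E]

theorem affine_field_sub_eq (A : E → E →L[ℝ] E) (b : E → E) (θ θ' : E) :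
    A θ θ + b θ - (A θ' θ' + b θ') = A θ' (θ - θ') + ((A θ - A θ') θ + (b θ - b θ')) := by
  simp only [sub_apply, map_sub]
  abel

theorem norm_apply_add_le_of_le {T : E →L[ℝ] E} {θ v : E} {α β G : ℝ}
    (hT : ‖T‖ ≤ α) (hθ : ‖θ‖ ≤ G) (hv : ‖v‖ ≤ β) : ‖T θ + v‖ ≤ α * G + β :=
  calc ‖T θ + v‖ ≤ ‖T‖ * ‖θ‖ + ‖v‖ := (norm_add_le _ _).trans (add_le_add_left (T.le_opNorm θ) _)
    _ ≤ α * G + β := add_le_add (mul_le_mul hT hθ (norm_nonneg _) ((norm_nonneg _).trans hT)) hv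

theorem real_inner_add_le_of_norm_le {x u y : E} {μ c : ℝ}
    (hu : ⟪x, u⟫ ≤ -(μ * ‖x‖ ^ 2)) (hy : ‖y‖ ≤ c * ‖x‖) :
    ⟪x, u + y⟫ ≤ -((μ - c) * ‖x‖ ^ 2) :=
  calc ⟪x, u + y⟫ = ⟪x, u⟫ + ⟪x, y⟫ := inner_add_right _ _ _
    _ ≤ -(μ * ‖x‖ ^ 2) + ‖x‖ * (c * ‖x‖) :=
        add_le_add hu ((real_inner_le_norm _ _).trans (mul_le_mul_of_nonneg_left hy (norm_nonneg _)))
    _ = -((μ - c) * ‖x‖ ^ 2) := by ring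

end

theorem stmt4_general {d : ℕ}
    (A : EuclideanSpace ℝ (Fin d) →
      (EuclideanSpace ℝ (Fin d) →L[ℝ] EuclideanSpace ℝ (Fin d)))
    (b : EuclideanSpace ℝ (Fin d) → EuclideanSpace ℝ (Fin d))
    (g : EuclideanSpace ℝ (Fin d) → EuclideanSpace ℝ (Fin d))
    (hg : ∀ θ, g θ = A θ θ + b θ)
    (θstar : EuclideanSpace ℝ (Fin d))
    (w R G σ γ L H : ℝ)
    (hH : H = R + (1 + γ) * G)
    (hneg : ∀ x : EuclideanSpace ℝ (Fin d),
      ⟪x, A θstar x⟫ ≤ -(2 * w * ‖x‖ ^ 2))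
    (hAdiff : ∀ θ, ‖A θ - A θstar‖ ≤ (1 + γ) * L * σ * ‖θ - θstar‖)
    (hbdiff : ∀ θ, ‖b θ - b θstar‖ ≤ R * L * σ * ‖θ - θstar‖)
    (hLσH : L * σ * H ≤ w) :
    ∀ θ : EuclideanSpace ℝ (Fin d), ‖θ‖ ≤ G →
      ⟪θ - θstar, g θ - g θstar⟫ ≤ -(w * ‖θ - θstar‖ ^ 2) := by
  intro θ hθ
  have hpert : ‖(A θ - A θstar) θ + (b θ - b θstar)‖ ≤ L * σ * H * ‖θ - θstar‖ :=
    (norm_apply_add_le_of_le (hAdiff θ) hθ (hbdiff θ)).trans_eq (by rw [hH]; ring)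
  calc ⟪θ - θstar, g θ - g θstar⟫
      = ⟪θ - θstar, A θstar (θ - θstar) + ((A θ - A θstar) θ + (b θ - b θstar))⟫ := by
        rw [hg, hg, affine_field_sub_eq]
    _ ≤ -((2 * w - L * σ * H) * ‖θ - θstar‖ ^ 2) := real_inner_add_le_of_norm_le (hneg _) hpert
    _ ≤ -(w * ‖θ - θstar‖ ^ 2) :=
        neg_le_neg (mul_le_mul_of_nonneg_right (by linarith) (sq_nonneg _))

/-- Descent-direction lemma (abstract form): for the mean-path semi-gradient
`g θ = A θ θ + b θ` with fixed point `θ*`, negative definiteness of `A θ*`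
(with constant `2w`), Lipschitz-type bounds on the TD-operator differences,
and the smallness condition `L σ H ≤ w`, one has
`⟨θ − θ*, g θ − g θ*⟩ ≤ −w ‖θ − θ*‖²` for every `θ` with `‖θ‖ ≤ G`. -/
theorem stmt4 {d : ℕ} (hd : 1 ≤ d)
    (A : EuclideanSpace ℝ (Fin d) →
      (EuclideanSpace ℝ (Fin d) →L[ℝ] EuclideanSpace ℝ (Fin d)))
    (b : EuclideanSpace ℝ (Fin d) → EuclideanSpace ℝ (Fin d))
    (g : EuclideanSpace ℝ (Fin d) → EuclideanSpace ℝ (Fin d))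
    (hg : ∀ θ, g θ = A θ θ + b θ)
    (θstar : EuclideanSpace ℝ (Fin d))
    (w R G σ γ L H : ℝ)
    (hw : 0 < w) (hR : 0 < R) (hG : 0 < G) (hσ : 0 < σ)
    (hγ : γ ∈ Set.Ioo (0 : ℝ) 1) (hL : 0 ≤ L)
    (hH : H = R + (1 + γ) * G)
    (hneg : ∀ x : EuclideanSpace ℝ (Fin d),
      ⟪x, A θstar x⟫ ≤ -(2 * w * ‖x‖ ^ 2))
    (hAdiff : ∀ θ, ‖A θ - A θstar‖ ≤ (1 + γ) * L * σ * ‖θ - θstar‖)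
    (hbdiff : ∀ θ, ‖b θ - b θstar‖ ≤ R * L * σ * ‖θ - θstar‖)
    (hLσH : L * σ * H ≤ w) :
    ∀ θ : EuclideanSpace ℝ (Fin d), ‖θ‖ ≤ G →
      ⟪θ - θstar, g θ - g θstar⟫ ≤ -(w * ‖θ - θstar‖ ^ 2) :=
  stmt4_general A b g hg θstar w R G σ γ L H hH hneg hAdiff hbdiff hLσH
end

section
/- Let k ≥ 1 be a natural number and α, H ≥ 0 real numbers with 16·k²·α² ≤ 1. Let Ω : ℕ → ℝ be a nonnegative sequence with Ω(0) = 0 such that for every j with 1 ≤ j ≤ k, Ω(j) ≤ 2kα²·(kH² + 4·Σ_{l=0}^{j−1} Ω(l)). Then Ω(k) ≤ 4·k²·H²·α². -/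
/-! The bound `B = 4k²H²α²` is reproduced by the recursion: if the first `j ≤ k` terms are at most
`B`, the right-hand side is at most `2k²H²α² + 8k²α²·B ≤ B/2 + B/2`, the last step being the
step-size condition `16k²α² ≤ 1`. -/

open Finset

theorem le_of_le_add_mul_sum_range {u : ℕ → ℝ} {a c B : ℝ} {k : ℕ} (hc : 0 ≤ c) (hB : 0 ≤ B)
    (h0 : u 0 ≤ B) (hclosed : a + c * (k * B) ≤ B)
    (hrec : ∀ j, 1 ≤ j → j ≤ k → u j ≤ a + c * ∑ l ∈ range j, u l) :
    ∀ j ≤ k, u j ≤ B := by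
  intro j
  induction j using Nat.strong_induction_on with
  | _ j ih =>
    intro hjk
    rcases Nat.eq_zero_or_pos j with rfl | hj
    · exact h0
    have hsum : ∑ l ∈ range j, u l ≤ k * B :=
      calc ∑ l ∈ range j, u l ≤ ∑ _l ∈ range j, B :=
            sum_le_sum fun l hl => ih l (mem_range.1 hl) ((mem_range.1 hl).le.trans hjk)
        _ = j * B := by rw [sum_const, card_range, nsmul_eq_mul]
        _ ≤ k * B := by gcongr
    calc u j ≤ a + c * ∑ l ∈ range j, u l := hrec j hj hjk
      _ ≤ a + c * (k * B) := by gcongr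
      _ ≤ B := hclosed

theorem stmt7_general (k : ℕ) (α H : ℝ)
    (hstep : 16 * (k : ℝ) ^ 2 * α ^ 2 ≤ 1)
    (Om : ℕ → ℝ) (h0 : Om 0 = 0)
    (hrec : ∀ j, 1 ≤ j → j ≤ k →
      Om j ≤ 2 * (k : ℝ) * α ^ 2 *
        ((k : ℝ) * H ^ 2 + 4 * ∑ l ∈ Finset.range j, Om l)) :
    Om k ≤ 4 * (k : ℝ) ^ 2 * H ^ 2 * α ^ 2 := by
  refine le_of_le_add_mul_sum_range (a := 2 * k ^ 2 * H ^ 2 * α ^ 2) (c := 8 * k * α ^ 2)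
    (by positivity) (by positivity) (by rw [h0]; positivity) ?_ ?_ k le_rfl
  · nlinarith [mul_nonneg (by positivity : (0 : ℝ) ≤ 2 * k ^ 2 * H ^ 2 * α ^ 2) (sub_nonneg.2 hstep)]
  · intro j hj hjk
    exact (hrec j hj hjk).trans_eq (by ring)

/-- Recursive client-drift bound: if `Ω 0 = 0`, `Ω` is nonnegative, and for
every `1 ≤ j ≤ k` one has `Ω j ≤ 2 k α² (k H² + 4 ∑_{l<j} Ω l)`, with the
step-size restriction `16 k² α² ≤ 1`, then `Ω k ≤ 4 k² H² α²`. -/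
theorem stmt7 (k : ℕ) (hk : 1 ≤ k) (α H : ℝ) (hα : 0 ≤ α) (hH : 0 ≤ H)
    (hstep : 16 * (k : ℝ) ^ 2 * α ^ 2 ≤ 1)
    (Om : ℕ → ℝ) (hnonneg : ∀ j, 0 ≤ Om j) (h0 : Om 0 = 0)
    (hrec : ∀ j, 1 ≤ j → j ≤ k →
      Om j ≤ 2 * (k : ℝ) * α ^ 2 *
        ((k : ℝ) * H ^ 2 + 4 * ∑ l ∈ Finset.range j, Om l)) :
    Om k ≤ 4 * (k : ℝ) ^ 2 * H ^ 2 * α ^ 2 :=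
  stmt7_general k α H hstep Om h0 hrec
end

section
/- Let w > 0 and a ≥ 1 be real, T a natural number, and define α_t = 4/(w·(a + t + 1)). Let e, B : ℕ → ℝ be nonnegative sequences satisfying e(t+1) ≤ (1 − α_t·w)·e(t) + α_t·B(t) for all t ≤ T. Then Σ_{t=0}^{T} (a + t)·e(t) ≤ (a(a−1)/2)·e(0) + (2/w)·Σ_{t=0}^{T} (a + t)·B(t). -/
/-! Multiplying the recursion by `(a+t)(a+t+1)/2` turns it into
`(a+t) e t ≤ Φ t - Φ (t+1) + (2/w)(a+t) B t` for the potential `Φ t = (a+t)(a+t-1)/2 · e t`,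
which is nonnegative; summing telescopes. -/

open Finset

theorem sum_le_of_le_sub_succ_add {u Φ g : ℕ → ℝ} {n : ℕ}
    (h : ∀ t < n, u t ≤ Φ t - Φ (t + 1) + g t) (hΦ : 0 ≤ Φ n) :
    ∑ t ∈ range n, u t ≤ Φ 0 + ∑ t ∈ range n, g t := by
  calc ∑ t ∈ range n, u t
      ≤ ∑ t ∈ range n, (Φ t - Φ (t + 1) + g t) :=
        sum_le_sum fun t ht => h t (mem_range.mp ht)
    _ = Φ 0 - Φ n + ∑ t ∈ range n, g t := by
        rw [sum_add_distrib, sum_range_sub']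
    _ ≤ Φ 0 + ∑ t ∈ range n, g t := by linarith

theorem mul_le_potential_sub_of_le_step {w x e e' b : ℝ} (hw : w ≠ 0) (hx : 0 ≤ x)
    (h : e' ≤ (1 - 4 / (w * (x + 1)) * w) * e + 4 / (w * (x + 1)) * b) :
    x * e ≤ x * (x - 1) / 2 * e - (x + 1) * x / 2 * e' + 2 / w * (x * b) := by
  have hmul := mul_le_mul_of_nonneg_left h (by positivity : 0 ≤ x * (x + 1) / 2)
  have hrhs : x * (x + 1) / 2 * ((1 - 4 / (w * (x + 1)) * w) * e + 4 / (w * (x + 1)) * b)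
      = x * (x - 3) / 2 * e + 2 / w * (x * b) := by
    field_simp
    ring
  linarith

theorem stmt9_general (w a : ℝ) (hw : 0 < w) (ha : 1 ≤ a) (T : ℕ)
    (α : ℕ → ℝ) (hα : ∀ t, α t = 4 / (w * (a + t + 1)))
    (e B : ℕ → ℝ) (he : ∀ t, 0 ≤ e t)
    (hrec : ∀ t ≤ T, e (t + 1) ≤ (1 - α t * w) * e t + α t * B t) :
    ∑ t ∈ Finset.range (T + 1), (a + t) * e t ≤
      a * (a - 1) / 2 * e 0 +
        (2 / w) * ∑ t ∈ Finset.range (T + 1), (a + t) * B t := by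
  have hweight : ∀ t : ℕ, 1 ≤ a + t := fun t => le_add_of_le_of_nonneg ha t.cast_nonneg
  set Φ : ℕ → ℝ := fun t => (a + t) * (a + t - 1) / 2 * e t with hΦ_def
  have hstep : ∀ t < T + 1, (a + t) * e t ≤ Φ t - Φ (t + 1) + 2 / w * ((a + t) * B t) := by
    intro t ht
    have hrec_t := hrec t (Nat.lt_succ_iff.mp ht)
    rw [hα] at hrec_t
    have := mul_le_potential_sub_of_le_step hw.ne' (by linarith [hweight t]) hrec_t
    simp only [hΦ_def]
    push_cast
    linarith
  have hΦ : 0 ≤ Φ (T + 1) := mul_nonneg (by nlinarith [hweight (T + 1)]) (he (T + 1))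
  simpa [mul_sum, hΦ_def] using sum_le_of_le_sub_succ_add hstep hΦ

/-- Weighted telescoping estimate for a linearly decaying step-size
`α_t = 4 / (w (a + t + 1))`: if `e (t+1) ≤ (1 − α_t w) e t + α_t B t` for all
`t ≤ T`, then `∑_{t=0}^{T} (a+t) e t ≤ (a(a−1)/2) e 0 + (2/w) ∑_{t=0}^{T} (a+t) B t`. -/
theorem stmt9 (w a : ℝ) (hw : 0 < w) (ha : 1 ≤ a) (T : ℕ)
    (α : ℕ → ℝ) (hα : ∀ t, α t = 4 / (w * (a + t + 1)))
    (e B : ℕ → ℝ) (he : ∀ t, 0 ≤ e t) (hB : ∀ t, 0 ≤ B t)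
    (hrec : ∀ t ≤ T, e (t + 1) ≤ (1 - α t * w) * e t + α t * B t) :
    ∑ t ∈ Finset.range (T + 1), (a + t) * e t ≤
      a * (a - 1) / 2 * e 0 +
        (2 / w) * ∑ t ∈ Finset.range (T + 1), (a + t) * B t :=
  stmt9_general w a hw ha T α hα e B he hrec
end

section
/- Let w > 0 and a ≥ 1 be real, T a natural number, c₁, c₂, c₃, c₄ ≥ 0, and define α_t = 4/(w·(a + t + 1)). Let e : ℕ → ℝ be a nonnegative sequence satisfying e(t+1) ≤ (1 − α_t·w)·e(t) + α_t·c₁ + α_t²·c₂ + α_t³·c₃ + α_t⁴·c₄ for all t ≤ T, and set C = Σ_{t=0}^{T} (a + t). Then (1/C)·Σ_{t=0}^{T} (a + t)·e(t) ≤ (a(a−1)/(2C))·e(0) + 2c₁/w + (8c₂/(w²·C))·(T+1) + (32c₃/(w³·C))·Σ_{t=0}^{T} 1/(a+t+1) + (128c₄/(w⁴·C))·Σ_{t=0}^{T} 1/(a+t+1)². -/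
/-! With `x = a + t`, multiplying the recursion at step `t` by the weight `x (x + 1) / 4` turns
`1 - α_t w = 1 - 4 / (x + 1)` into the coefficient `x (x - 1) / 4 - x / 2`, so the potential
`s_t = (a + t) (a + t - 1) / 4 · e_t` satisfies `(a + t) / 2 · e_t ≤ s_t - s_{t+1} + (noise)`.
Summing telescopes, and `s_{T+1} ≥ 0` leaves only `s_0 = a (a - 1) / 4 · e_0`. -/

open Finset

theorem sum_range_le_of_le_sub_succ_add {M : Type*} [AddCommGroup M] [PartialOrder M]
    [IsOrderedAddMonoid M] {f g s : ℕ → M} {n : ℕ}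
    (h : ∀ t < n, f t ≤ s t - s (t + 1) + g t) (hs : 0 ≤ s n) :
    ∑ t ∈ range n, f t ≤ s 0 + ∑ t ∈ range n, g t :=
  calc ∑ t ∈ range n, f t ≤ ∑ t ∈ range n, (s t - s (t + 1) + g t) :=
        sum_le_sum fun t ht => h t (mem_range.mp ht)
    _ = s 0 - s n + ∑ t ∈ range n, g t := by rw [sum_add_distrib, sum_range_sub']
    _ ≤ s 0 + ∑ t ∈ range n, g t := by gcongr; exact sub_le_self _ hs

theorem weighted_stepSize_pow_le {w x : ℝ} (hw : 0 < w) (hx : 0 ≤ x) (n : ℕ) :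
    x * (x + 1) / 4 * (4 / (w * (x + 1))) ^ (n + 2) ≤
      4 ^ (n + 1) / w ^ (n + 2) / (x + 1) ^ n := by
  have hfactor : x * (x + 1) / 4 * (4 / (w * (x + 1))) ^ (n + 2) =
      4 ^ (n + 1) / w ^ (n + 2) / (x + 1) ^ n * (x / (x + 1)) := by
    have hx₁ : x + 1 ≠ 0 := by positivity
    rw [div_pow, mul_pow]; field_simp; ring
  rw [hfactor]
  exact mul_le_of_le_one_right (by positivity) (div_le_one_of_le₀ (by linarith) (by positivity))

theorem weighted_recursion_step_le {w x β c₁ c₂ c₃ c₄ u v : ℝ} (hw : 0 < w) (hx : 0 ≤ x)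
    (hc₂ : 0 ≤ c₂) (hc₃ : 0 ≤ c₃) (hc₄ : 0 ≤ c₄) (hβ : β = 4 / (w * (x + 1)))
    (hv : v ≤ (1 - β * w) * u + β * c₁ + β ^ 2 * c₂ + β ^ 3 * c₃ + β ^ 4 * c₄) :
    x / 2 * u ≤ x * (x - 1) / 4 * u - x * (x + 1) / 4 * v +
      (x * c₁ / w + 4 * c₂ / w ^ 2 + 16 * c₃ / w ^ 3 * (1 / (x + 1)) +
        64 * c₄ / w ^ 4 * (1 / (x + 1) ^ 2)) := by
  have hweight : 0 ≤ x * (x + 1) / 4 := by positivity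
  have hx₁ : x + 1 ≠ 0 := by positivity
  have hcontract : x * (x + 1) / 4 * (1 - β * w) = x * (x - 1) / 4 - x / 2 := by
    rw [hβ]; field_simp; ring
  have hlinear : x * (x + 1) / 4 * β = x / w := by
    rw [hβ]; field_simp
  have h₂ := mul_le_mul_of_nonneg_right (weighted_stepSize_pow_le hw hx 0) hc₂
  have h₃ := mul_le_mul_of_nonneg_right (weighted_stepSize_pow_le hw hx 1) hc₃
  have h₄ := mul_le_mul_of_nonneg_right (weighted_stepSize_pow_le hw hx 2) hc₄
  rw [← hβ] at h₂ h₃ h₄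
  have := mul_le_mul_of_nonneg_left hv hweight
  norm_num at h₂ h₃ h₄
  linear_combination this + h₂ + h₃ + h₄ + u * hcontract + c₁ * hlinear

theorem stmt10_general (w a : ℝ) (hw : 0 < w) (ha : 1 ≤ a) (T : ℕ)
    (c₁ c₂ c₃ c₄ : ℝ) (hc₂ : 0 ≤ c₂) (hc₃ : 0 ≤ c₃) (hc₄ : 0 ≤ c₄)
    (α : ℕ → ℝ) (hα : ∀ t, α t = 4 / (w * (a + t + 1)))
    (e : ℕ → ℝ) (he : ∀ t, 0 ≤ e t)
    (hrec : ∀ t ≤ T, e (t + 1) ≤ (1 - α t * w) * e t +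
      α t * c₁ + (α t) ^ 2 * c₂ + (α t) ^ 3 * c₃ + (α t) ^ 4 * c₄)
    (C : ℝ) (hC : C = ∑ t ∈ Finset.range (T + 1), (a + t)) :
    (1 / C) * ∑ t ∈ Finset.range (T + 1), (a + t) * e t ≤
      a * (a - 1) / (2 * C) * e 0 + 2 * c₁ / w +
        (8 * c₂ / (w ^ 2 * C)) * (T + 1) +
        (32 * c₃ / (w ^ 3 * C)) * ∑ t ∈ Finset.range (T + 1), 1 / (a + t + 1) +
        (128 * c₄ / (w ^ 4 * C)) *
          ∑ t ∈ Finset.range (T + 1), 1 / (a + t + 1) ^ 2 := by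
  have hpos : ∀ t : ℕ, 1 ≤ a + t := fun t => le_add_of_le_of_nonneg ha t.cast_nonneg
  set s : ℕ → ℝ := fun t => (a + t) * (a + t - 1) / 4 * e t
  have hstep : ∀ t < T + 1, (a + t) / 2 * e t ≤ s t - s (t + 1) +
      ((a + t) * c₁ / w + 4 * c₂ / w ^ 2 + 16 * c₃ / w ^ 3 * (1 / (a + t + 1)) +
        64 * c₄ / w ^ 4 * (1 / (a + t + 1) ^ 2)) := fun t ht => by
    have := weighted_recursion_step_le hw (by linarith [hpos t]) hc₂ hc₃ hc₄ (hα t)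
      (hrec t (Nat.lt_succ_iff.mp ht))
    simp only [s]; push_cast; linear_combination this
  have hsum := sum_range_le_of_le_sub_succ_add hstep
    (mul_nonneg (by nlinarith [hpos (T + 1)]) (he (T + 1)))
  simp only [sum_add_distrib, ← sum_div, ← sum_mul, ← mul_sum, sum_const, card_range,
    nsmul_eq_mul, ← hC, s] at hsum
  have hCpos : 0 < C := hC ▸ sum_pos (fun t _ => by linarith [hpos t]) nonempty_range_add_one
  generalize ∑ t ∈ range (T + 1), 1 / (a + t + 1) = S₁ at hsum ⊢
  generalize ∑ t ∈ range (T + 1), 1 / (a + t + 1) ^ 2 = S₂ at hsum ⊢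
  calc (1 / C) * ∑ t ∈ range (T + 1), (a + t) * e t
      = 2 / C * ∑ t ∈ range (T + 1), (a + t) / 2 * e t := by
        rw [mul_sum, mul_sum]; exact sum_congr rfl fun t _ => by ring
    _ ≤ 2 / C * (a * (a - 1) / 4 * e 0 + (C * c₁ / w + (T + 1) * 4 * c₂ / w ^ 2 +
          16 * c₃ / w ^ 3 * S₁ + 64 * c₄ / w ^ 4 * S₂)) := by
        gcongr; simpa using hsum
    _ = _ := by field_simp; ring

/-- Full quantitative form of the finite-time error bound for a linearly
decaying step-size `α_t = 4 / (w (a + t + 1))`: the weighted average of the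
errors `e t` (controlling the convex-combination iterate) is bounded by the
initial-error term, the heterogeneity term `2 c₁ / w`, the `O(1/N)` variance
term, and higher-order terms. -/
theorem stmt10 (w a : ℝ) (hw : 0 < w) (ha : 1 ≤ a) (T : ℕ)
    (c₁ c₂ c₃ c₄ : ℝ) (hc₁ : 0 ≤ c₁) (hc₂ : 0 ≤ c₂) (hc₃ : 0 ≤ c₃) (hc₄ : 0 ≤ c₄)
    (α : ℕ → ℝ) (hα : ∀ t, α t = 4 / (w * (a + t + 1)))
    (e : ℕ → ℝ) (he : ∀ t, 0 ≤ e t)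
    (hrec : ∀ t ≤ T, e (t + 1) ≤ (1 - α t * w) * e t +
      α t * c₁ + (α t) ^ 2 * c₂ + (α t) ^ 3 * c₃ + (α t) ^ 4 * c₄)
    (C : ℝ) (hC : C = ∑ t ∈ Finset.range (T + 1), (a + t)) :
    (1 / C) * ∑ t ∈ Finset.range (T + 1), (a + t) * e t ≤
      a * (a - 1) / (2 * C) * e 0 + 2 * c₁ / w +
        (8 * c₂ / (w ^ 2 * C)) * (T + 1) +
        (32 * c₃ / (w ^ 3 * C)) * ∑ t ∈ Finset.range (T + 1), 1 / (a + t + 1) +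
        (128 * c₄ / (w ^ 4 * C)) *
          ∑ t ∈ Finset.range (T + 1), 1 / (a + t + 1) ^ 2 :=
  stmt10_general w a hw ha T c₁ c₂ c₃ c₄ hc₂ hc₃ hc₄ α hα e he hrec C hC
end

section
/- Let S and A be finite types. Let μ₁, μ₂ : S × A → ℝ be nonnegative with Σ_{(s,a)} μ₁(s,a) = 1 and Σ_{(s,a)} μ₂(s,a) = 1. For each a ∈ A let P¹_a and P²_a be S×S real matrices with nonnegative entries whose rows each sum to 1, and let π : S → A → ℝ be nonnegative with Σ_{a'} π(s')(a') = 1 for every s'. Define φ_i(s,a,s',a') = μ_i(s,a)·P^i_a(s,s')·π(s')(a'). Then Σ_{s,a,s',a'} |φ₁(s,a,s',a') − φ₂(s,a,s',a')| ≤ Σ_{s,a} |μ₁(s,a) − μ₂(s,a)| + max_{(s,a)} Σ_{s'} |P¹_a(s,s') − P²_a(s,s')|. -/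
/-!
Write `μ₁ P₁ − μ₂ P₂ = (μ₁ − μ₂) P₁ + μ₂ (P₁ − P₂)`. Since `P₁` is stochastic, the first term
contributes exactly `‖μ₁ − μ₂‖₁`; the second is a `μ₂`-average of the row distances of the
kernels, hence at most their maximum. Appending the common policy step `π` is a stochastic
map applied to both sides and does not change the ℓ¹ distance.
-/

open Finset

section

variable {α β : Type*} [Fintype α] [Fintype β]

lemma abs_mul_sub_mul_le {x₁ x₂ y₁ y₂ : ℝ} (hx₂ : 0 ≤ x₂) (hy₁ : 0 ≤ y₁) :
    |x₁ * y₁ - x₂ * y₂| ≤ |x₁ - x₂| * y₁ + x₂ * |y₁ - y₂| := by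
  calc |x₁ * y₁ - x₂ * y₂| = |(x₁ - x₂) * y₁ + x₂ * (y₁ - y₂)| :=
        congrArg abs (by ring)
    _ ≤ |(x₁ - x₂) * y₁| + |x₂ * (y₁ - y₂)| := abs_add_le _ _
    _ = |x₁ - x₂| * y₁ + x₂ * |y₁ - y₂| := by
      rw [abs_mul, abs_mul, abs_of_nonneg hy₁, abs_of_nonneg hx₂]

lemma sum_mul_le_sup' [Nonempty α] {w : α → ℝ} (hw : ∀ x, 0 ≤ w x) (hw₁ : ∑ x, w x = 1)
    (f : α → ℝ) : ∑ x, w x * f x ≤ univ.sup' univ_nonempty f :=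
  calc ∑ x, w x * f x ≤ ∑ x, w x * univ.sup' univ_nonempty f :=
        sum_le_sum fun x hx => mul_le_mul_of_nonneg_left (le_sup' f hx) (hw x)
    _ = univ.sup' univ_nonempty f := by rw [← sum_mul, hw₁, one_mul]

lemma sum_abs_sub_mul_stochastic {π : β → ℝ} (hπ : ∀ y, 0 ≤ π y) (hπ₁ : ∑ y, π y = 1)
    (u v : ℝ) : ∑ y, |u * π y - v * π y| = |u - v| := by
  simp only [← sub_mul, abs_mul, abs_of_nonneg (hπ _), ← mul_sum, hπ₁, mul_one]

lemma sum_abs_mul_sub_mul_le [Nonempty α] (μ₁ μ₂ : α → ℝ) (hμ₂ : ∀ x, 0 ≤ μ₂ x)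
    (hμ₂₁ : ∑ x, μ₂ x = 1) (κ₁ κ₂ : α → β → ℝ) (hκ₁ : ∀ x y, 0 ≤ κ₁ x y)
    (hκ₁₁ : ∀ x, ∑ y, κ₁ x y = 1) :
    ∑ x, ∑ y, |μ₁ x * κ₁ x y - μ₂ x * κ₂ x y| ≤
      ∑ x, |μ₁ x - μ₂ x| + univ.sup' univ_nonempty (fun x => ∑ y, |κ₁ x y - κ₂ x y|) :=
  calc ∑ x, ∑ y, |μ₁ x * κ₁ x y - μ₂ x * κ₂ x y|
      ≤ ∑ x, ∑ y, (|μ₁ x - μ₂ x| * κ₁ x y + μ₂ x * |κ₁ x y - κ₂ x y|) :=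
        sum_le_sum fun x _ => sum_le_sum fun y _ => abs_mul_sub_mul_le (hμ₂ x) (hκ₁ x y)
    _ = ∑ x, |μ₁ x - μ₂ x| + ∑ x, μ₂ x * ∑ y, |κ₁ x y - κ₂ x y| := by
        simp only [sum_add_distrib, ← mul_sum, hκ₁₁, mul_one]
    _ ≤ _ := add_le_add le_rfl (sum_mul_le_sup' hμ₂ hμ₂₁ _)

end

theorem stmt16_general {S A : Type*} [Fintype S] [Fintype A] [Nonempty S] [Nonempty A]
    (μ₁ μ₂ : S × A → ℝ) (hμ₂pos : ∀ p, 0 ≤ μ₂ p)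
    (hμ₂sum : ∑ p, μ₂ p = 1)
    (P₁ P₂ : A → Matrix S S ℝ)
    (hP₁pos : ∀ a s s', 0 ≤ P₁ a s s')
    (hP₁row : ∀ a s, ∑ s', P₁ a s s' = 1)
    (π : S → A → ℝ) (hπpos : ∀ s a, 0 ≤ π s a) (hπsum : ∀ s', ∑ a', π s' a' = 1)
    (φ₁ φ₂ : S → A → S → A → ℝ)
    (hφ₁ : ∀ s a s' a', φ₁ s a s' a' = μ₁ (s, a) * P₁ a s s' * π s' a')
    (hφ₂ : ∀ s a s' a', φ₂ s a s' a' = μ₂ (s, a) * P₂ a s s' * π s' a') :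
    ∑ s, ∑ a, ∑ s', ∑ a', |φ₁ s a s' a' - φ₂ s a s' a'| ≤
      (∑ s, ∑ a, |μ₁ (s, a) - μ₂ (s, a)|) +
        Finset.univ.sup' Finset.univ_nonempty
          (fun p : S × A => ∑ s', |P₁ p.2 p.1 s' - P₂ p.2 p.1 s'|) := by
  have hpolicy : ∀ s a s', ∑ a', |φ₁ s a s' a' - φ₂ s a s' a'| =
      |μ₁ (s, a) * P₁ a s s' - μ₂ (s, a) * P₂ a s s'| := fun s a s' => by
    simp only [hφ₁, hφ₂]
    exact sum_abs_sub_mul_stochastic (hπpos s') (hπsum s') _ _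
  have hkernel := sum_abs_mul_sub_mul_le μ₁ μ₂ hμ₂pos hμ₂sum (fun p => P₁ p.2 p.1)
    (fun p => P₂ p.2 p.1) (fun p => hP₁pos p.2 p.1) (fun p => hP₁row p.2 p.1)
  simp only [Fintype.sum_prod_type] at hkernel
  simpa only [hpolicy] using hkernel

/-- Two-step steady distribution comparison: for probability vectors `μ₁, μ₂`
on `S × A`, stochastic kernels `P¹, P²`, and a policy `π`, the ℓ¹ distance
between the two-step distributions
`φ_i(s,a,s',a') = μ_i(s,a) · Pⁱ_a(s,s') · π s' a'` is at most the ℓ¹ distance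
of the state-action distributions plus the maximal row-ℓ¹ distance between the
kernels. -/
theorem stmt16 {S A : Type*} [Fintype S] [Fintype A] [Nonempty S] [Nonempty A]
    (μ₁ μ₂ : S × A → ℝ) (hμ₁pos : ∀ p, 0 ≤ μ₁ p) (hμ₂pos : ∀ p, 0 ≤ μ₂ p)
    (hμ₁sum : ∑ p, μ₁ p = 1) (hμ₂sum : ∑ p, μ₂ p = 1)
    (P₁ P₂ : A → Matrix S S ℝ)
    (hP₁pos : ∀ a s s', 0 ≤ P₁ a s s') (hP₂pos : ∀ a s s', 0 ≤ P₂ a s s')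
    (hP₁row : ∀ a s, ∑ s', P₁ a s s' = 1) (hP₂row : ∀ a s, ∑ s', P₂ a s s' = 1)
    (π : S → A → ℝ) (hπpos : ∀ s a, 0 ≤ π s a) (hπsum : ∀ s', ∑ a', π s' a' = 1)
    (φ₁ φ₂ : S → A → S → A → ℝ)
    (hφ₁ : ∀ s a s' a', φ₁ s a s' a' = μ₁ (s, a) * P₁ a s s' * π s' a')
    (hφ₂ : ∀ s a s' a', φ₂ s a s' a' = μ₂ (s, a) * P₂ a s s' * π s' a') :
    ∑ s, ∑ a, ∑ s', ∑ a', |φ₁ s a s' a' - φ₂ s a s' a'| ≤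
      (∑ s, ∑ a, |μ₁ (s, a) - μ₂ (s, a)|) +
        Finset.univ.sup' Finset.univ_nonempty
          (fun p : S × A => ∑ s', |P₁ p.2 p.1 s' - P₂ p.2 p.1 s'|) :=
  stmt16_general μ₁ μ₂ hμ₂pos hμ₂sum P₁ P₂ hP₁pos hP₁row π hπpos hπsum φ₁ φ₂ hφ₁ hφ₂
end
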